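/- arXiv:1606.05312 — 4 statements merged into one kernel-verified Lean document; each statement's English description precedes it below -/
import Mathlib

section
/- Let M be a finite MDP with state space S, action space A, transition kernel p, reward r bounded, and discount γ ∈ [0,1). Let π₁,...,πₙ be policies with action-value functions Q^{π_i}, and let Q̃^{π_i} satisfy |Q^{π_i}(s,a) − Q̃^{π_i}(s,a)| ≤ ε for all s,a,i. Define π(s) ∈ argmax_a max_i Q̃^{π_i}(s,a). Then for all s,a: Q^{π}(s,a) ≥ max_i Q^{π_i}(s,a) − 2ε/(1−γ). -/
open Finset

/-- Generalized Policy Improvement (Theorem 1). -/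
theorem generalized_policy_improvement
    {S A : Type*} [Fintype S] [Fintype A] [Nonempty S] [Nonempty A]
    (p : S → A → S → ℝ)
    (hp0 : ∀ s a s', 0 ≤ p s a s') (hp1 : ∀ s a, ∑ s', p s a s' = 1)
    (r : S → A → ℝ) (γ : ℝ) (hγ0 : 0 ≤ γ) (hγ1 : γ < 1)
    (n : ℕ) (hn : 0 < n)
    (πi : Fin n → S → A)
    (Q : Fin n → S → A → ℝ)
    (hQ : ∀ i s a, Q i s a = r s a + γ * ∑ s', p s a s' * Q i s' (πi i s'))
    (Qt : Fin n → S → A → ℝ) (ε : ℝ)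
    (hε : ∀ i s a, |Q i s a - Qt i s a| ≤ ε)
    (π : S → A)
    (hπ : ∀ s a, (⨆ i, Qt i s a) ≤ ⨆ i, Qt i s (π s))
    (Qπ : S → A → ℝ)
    (hQπ : ∀ s a, Qπ s a = r s a + γ * ∑ s', p s a s' * Qπ s' (π s')) :
    ∀ s a, (⨆ i, Q i s a) - 2 * ε / (1 - γ) ≤ Qπ s a := by
  haveI : Nonempty (Fin n) := ⟨⟨0, hn⟩⟩
  have hεpos : 0 ≤ ε := le_trans (abs_nonneg _) (hε ⟨0, hn⟩ (Classical.arbitrary S) (Classical.arbitrary A))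
  have hbdd : ∀ (f : Fin n → ℝ), BddAbove (Set.range f) := fun f =>
    (Set.finite_range f).bddAbove
  have hbddS : ∀ (f : S → ℝ), BddAbove (Set.range f) := fun f =>
    (Set.finite_range f).bddAbove
  set D : ℝ := ⨆ s : S, ((⨆ j, Q j s (π s)) - Qπ s (π s)) with hD
  -- pointwise bound used in the step lemma
  have hpt : ∀ i (s' : S), Q i s' (πi i s') - Qπ s' (π s') ≤ D + 2 * ε := by
    intro i s'
    have h1 : Q i s' (πi i s') ≤ Qt i s' (πi i s') + ε := by
      have := hε i s' (πi i s'); have := abs_le.mp this; linarith [this.2]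
    have h2 : Qt i s' (πi i s') ≤ ⨆ j, Qt j s' (πi i s') := le_ciSup (f := fun j => Qt j s' (πi i s')) (hbdd _) i
    have h3 : (⨆ j, Qt j s' (πi i s')) ≤ ⨆ j, Qt j s' (π s') := hπ s' (πi i s')
    have h4 : (⨆ j, Qt j s' (π s')) ≤ (⨆ j, Q j s' (π s')) + ε := by
      apply ciSup_le
      intro j
      have := abs_le.mp (hε j s' (π s'))
      have hj : Qt j s' (π s') ≤ Q j s' (π s') + ε := by linarith [this.1]
      exact hj.trans (by gcongr; exact le_ciSup (f := fun j => Q j s' (π s')) (hbdd _) j)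
    have h5 : (⨆ j, Q j s' (π s')) - Qπ s' (π s') ≤ D := le_ciSup (f := fun s => (⨆ j, Q j s (π s)) - Qπ s (π s)) (hbddS _) s'
    linarith
  have step : ∀ i s a, Q i s a - Qπ s a ≤ γ * (D + 2 * ε) := by
    intro i s a
    rw [hQ, hQπ]
    have : (∑ s', p s a s' * Q i s' (πi i s')) - ∑ s', p s a s' * Qπ s' (π s')
        ≤ D + 2 * ε := by
      rw [← Finset.sum_sub_distrib]
      calc ∑ s', (p s a s' * Q i s' (πi i s') - p s a s' * Qπ s' (π s'))
          ≤ ∑ s', p s a s' * (D + 2 * ε) := by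
            apply Finset.sum_le_sum
            intro s' _
            rw [← mul_sub]
            exact mul_le_mul_of_nonneg_left (hpt i s') (hp0 s a s')
        _ = D + 2 * ε := by rw [← Finset.sum_mul, hp1, one_mul]
    nlinarith [this]
  have hDle : D ≤ γ * (D + 2 * ε) := by
    apply ciSup_le
    intro s
    have : (⨆ j, Q j s (π s)) ≤ Qπ s (π s) + γ * (D + 2 * ε) := by
      apply ciSup_le
      intro j
      linarith [step j s (π s)]
    linarith
  have hDbound : D ≤ 2 * γ * ε / (1 - γ) := by
    rw [le_div_iff₀ (by linarith : (0:ℝ) < 1 - γ)]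
    nlinarith
  intro s a
  have hfin : (⨆ i, Q i s a) ≤ Qπ s a + γ * (D + 2 * ε) := by
    apply ciSup_le
    intro i
    linarith [step i s a]
  have h1γ : (0:ℝ) < 1 - γ := by linarith
  have : γ * (D + 2 * ε) ≤ 2 * ε / (1 - γ) := by
    rw [le_div_iff₀ h1γ] at hDbound
    rw [le_div_iff₀ h1γ]
    nlinarith
  linarith
end

section
/- Let M₁ and M₂ be two finite MDPs differing only in rewards r₁, r₂, with δ = max_{s,a}|r₁(s,a)−r₂(s,a)|. Let π*₂ be an optimal policy of M₂ and let Q₁^{π*₂} be its action-value function when executed in M₁, and Q*₁ the optimal action-value function of M₁. Then for all (s,a): Q*₁(s,a) − Q₁^{π*₂}(s,a) ≤ 2δ/(1−γ). -/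
open Finset

/-- weighted average bound -/
lemma tlb_sum_bound {S : Type*} [Fintype S] (w e : S → ℝ) (K : ℝ)
    (hw0 : ∀ s, 0 ≤ w s) (hw1 : ∑ s, w s = 1) (he : ∀ s, |e s| ≤ K) :
    |∑ s, w s * e s| ≤ K := by
  calc |∑ s, w s * e s| ≤ ∑ s, |w s * e s| := Finset.abs_sum_le_sum_abs _ _
    _ ≤ ∑ s, w s * K := by
        apply Finset.sum_le_sum
        intro s _
        rw [abs_mul, abs_of_nonneg (hw0 s)]
        exact mul_le_mul_of_nonneg_left (he s) (hw0 s)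
    _ = K := by rw [← Finset.sum_mul, hw1, one_mul]

/-- sup difference bound -/
lemma tlb_sup_bound {A : Type*} [Fintype A] [Nonempty A] (f g : A → ℝ) (K : ℝ)
    (h : ∀ b, |f b - g b| ≤ K) : |(⨆ b, f b) - ⨆ b, g b| ≤ K := by
  have bf : BddAbove (Set.range f) := (Set.finite_range f).bddAbove
  have bg : BddAbove (Set.range g) := (Set.finite_range g).bddAbove
  rw [abs_sub_le_iff]
  constructor
  · rw [sub_le_iff_le_add]
    apply ciSup_le
    intro b
    have h1 := (abs_le.mp (h b)).2
    have h2 := le_ciSup bg b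
    linarith
  · rw [sub_le_iff_le_add]
    apply ciSup_le
    intro b
    have h1 := (abs_le.mp (h b)).1
    have h2 := le_ciSup bf b
    linarith

/-- contraction fixed-point bound -/
lemma tlb_fix_bound {S A : Type*} [Fintype S] [Fintype A] [Nonempty S] [Nonempty A]
    (γ δ : ℝ) (hγ0 : 0 ≤ γ) (hγ1 : γ < 1) (D : S → A → ℝ)
    (h : ∀ K, (∀ s a, |D s a| ≤ K) → ∀ s a, |D s a| ≤ δ + γ * K) :
    ∀ s a, |D s a| ≤ δ / (1 - γ) := by
  obtain ⟨⟨s₀, a₀⟩, hm⟩ := Finite.exists_max (fun x : S × A => |D x.1 x.2|)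
  set K := |D s₀ a₀| with hKdef
  have hKb : ∀ s a, |D s a| ≤ K := fun s a => hm (s, a)
  have hstep : K ≤ δ + γ * K := h K hKb s₀ a₀
  have hK : K ≤ δ / (1 - γ) := by
    rw [le_div_iff₀ (by linarith)]
    nlinarith
  exact fun s a => le_trans (hKb s a) hK

/-- Lemma 1 of the paper: executing task 2's optimal policy in task 1 loses
at most 2δ/(1-γ). -/
theorem transfer_loss_bound
    {S A : Type*} [Fintype S] [Fintype A] [Nonempty S] [Nonempty A]
    (p : S → A → S → ℝ)
    (hp0 : ∀ s a s', 0 ≤ p s a s') (hp1 : ∀ s a, ∑ s', p s a s' = 1)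
    (r₁ r₂ : S → A → ℝ) (γ : ℝ) (hγ0 : 0 ≤ γ) (hγ1 : γ < 1)
    (δ : ℝ) (hδ : ∀ s a, |r₁ s a - r₂ s a| ≤ δ)
    -- Q*₁ : optimal action-value function of M₁
    (Qstar₁ : S → A → ℝ)
    (hQstar₁ : ∀ s a, Qstar₁ s a = r₁ s a + γ * ∑ s', p s a s' * ⨆ b, Qstar₁ s' b)
    -- π₂* : an optimal policy of M₂, i.e. its value function in M₂ is Q*₂
    (π₂ : S → A)
    (Qstar₂ : S → A → ℝ)
    (hQstar₂ : ∀ s a, Qstar₂ s a = r₂ s a + γ * ∑ s', p s a s' * ⨆ b, Qstar₂ s' b)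
    (hπ₂opt : ∀ s a, Qstar₂ s a = r₂ s a + γ * ∑ s', p s a s' * Qstar₂ s' (π₂ s'))
    -- Q₁^{π₂*} : value of π₂* executed in M₁
    (Q₁π₂ : S → A → ℝ)
    (hQ₁π₂ : ∀ s a, Q₁π₂ s a = r₁ s a + γ * ∑ s', p s a s' * Q₁π₂ s' (π₂ s')) :
    ∀ s a, Qstar₁ s a - Q₁π₂ s a ≤ 2 * δ / (1 - γ) := by
  -- bound 1 : |Q*₁ - Q*₂| ≤ δ/(1-γ)
  have hB1 : ∀ s a, |Qstar₁ s a - Qstar₂ s a| ≤ δ / (1 - γ) := by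
    apply tlb_fix_bound γ δ hγ0 hγ1
    intro K hK s a
    have key : Qstar₁ s a - Qstar₂ s a
        = (r₁ s a - r₂ s a)
          + γ * ∑ s', p s a s' * ((⨆ b, Qstar₁ s' b) - ⨆ b, Qstar₂ s' b) := by
      rw [hQstar₁ s a, hQstar₂ s a]
      simp [mul_sub, Finset.sum_sub_distrib, mul_sub]
      ring
    rw [key]
    have h2 : |∑ s', p s a s' * ((⨆ b, Qstar₁ s' b) - ⨆ b, Qstar₂ s' b)| ≤ K := by
      apply tlb_sum_bound _ _ _ (hp0 s a) (hp1 s a)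
      intro s'
      exact tlb_sup_bound _ _ _ (fun b => hK s' b)
    calc |(r₁ s a - r₂ s a) + γ * ∑ s', p s a s' * ((⨆ b, Qstar₁ s' b) - ⨆ b, Qstar₂ s' b)|
        ≤ |r₁ s a - r₂ s a| + |γ * ∑ s', p s a s' * ((⨆ b, Qstar₁ s' b) - ⨆ b, Qstar₂ s' b)| :=
          abs_add_le _ _
      _ ≤ δ + γ * K := by
          have := hδ s a
          rw [abs_mul, abs_of_nonneg hγ0]
          have := mul_le_mul_of_nonneg_left h2 hγ0
          linarith
  -- bound 2 : |Q₁^{π₂} - Q*₂| ≤ δ/(1-γ)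
  have hB2 : ∀ s a, |Q₁π₂ s a - Qstar₂ s a| ≤ δ / (1 - γ) := by
    apply tlb_fix_bound γ δ hγ0 hγ1
    intro K hK s a
    have key : Q₁π₂ s a - Qstar₂ s a
        = (r₁ s a - r₂ s a)
          + γ * ∑ s', p s a s' * (Q₁π₂ s' (π₂ s') - Qstar₂ s' (π₂ s')) := by
      rw [hQ₁π₂ s a, hπ₂opt s a]
      simp [mul_sub, Finset.sum_sub_distrib]
      ring
    rw [key]
    have h2 : |∑ s', p s a s' * (Q₁π₂ s' (π₂ s') - Qstar₂ s' (π₂ s'))| ≤ K := by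
      apply tlb_sum_bound _ _ _ (hp0 s a) (hp1 s a)
      intro s'
      exact hK s' (π₂ s')
    calc |(r₁ s a - r₂ s a) + γ * ∑ s', p s a s' * (Q₁π₂ s' (π₂ s') - Qstar₂ s' (π₂ s'))|
        ≤ |r₁ s a - r₂ s a| + |γ * ∑ s', p s a s' * (Q₁π₂ s' (π₂ s') - Qstar₂ s' (π₂ s'))| :=
          abs_add_le _ _
      _ ≤ δ + γ * K := by
          have := hδ s a
          rw [abs_mul, abs_of_nonneg hγ0]
          have := mul_le_mul_of_nonneg_left h2 hγ0
          linarith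
  intro s a
  have h1 := (abs_le.mp (hB1 s a)).2
  have h2 := (abs_le.mp (hB2 s a)).1
  have : 2 * δ / (1 - γ) = δ / (1 - γ) + δ / (1 - γ) := by ring
  linarith
end

section
/- Let M_φ be the family of finite MDPs sharing (S,A,p,γ) with rewards of the form r_w(s,a) = φ(s,a)ᵀw for a fixed feature map φ : S×A → ℝ^d. Fix w₁,...,wₙ and a target wᵢ ∈ ℝ^d. Let π*_j be an optimal policy for task w_j and Q_i^{π*_j} its value function in task wᵢ, and suppose approximations Q̃_j satisfy |Q_i^{π*_j}(s,a) − Q̃_j(s,a)| ≤ ε for all s,a,j. Define π(s) ∈ argmax_a max_j Q̃_j(s,a) and φ_max = max_{s,a} ‖φ(s,a)‖₂. Then for all (s,a): Q*_i(s,a) − Q_i^{π}(s,a) ≤ (2/(1−γ)) (φ_max · min_j ‖wᵢ − w_j‖₂ + ε), where Q*_i is the optimal value function of task wᵢ. -/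
/-!
Every comparison of two action-value functions reduces to one fact: if a difference `D`
obeys `D(s,a) ≤ c + γ 𝔼_{s'} D(s', b(s'))` for some choice of actions `b`, then evaluating
at a maximiser of `D` gives `max D ≤ c + γ max D`, i.e. `D ≤ c / (1 - γ)`.
Pick `j` minimising `‖wᵢ - w_j‖`. By Cauchy–Schwarz the rewards of tasks `wᵢ` and `w_j`
differ by at most `δ = φ_max ‖wᵢ - w_j‖`, so `Q*ᵢ - Q*_j ≤ δ / (1 - γ)` and
`Q*_j - Qᵢ^{π*_j} ≤ δ / (1 - γ)`. Generalised policy improvement gives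
`Qᵢ^{π*_j} - Qᵢ^π ≤ 2γε / (1 - γ)`, and the three bounds add up.
-/

open Finset

section BellmanComparison

variable {S A : Type*} [Fintype S] {p : S → A → S → ℝ} {γ : ℝ}

lemma sum_mul_le_of_forall_le {q f : S → ℝ} {M : ℝ} (hq0 : ∀ s, 0 ≤ q s)
    (hq1 : ∑ s, q s = 1) (hf : ∀ s, f s ≤ M) : ∑ s, q s * f s ≤ M :=
  calc ∑ s, q s * f s ≤ ∑ s, q s * M :=
        sum_le_sum fun s _ => mul_le_mul_of_nonneg_left (hf s) (hq0 s)
    _ = M := by rw [← sum_mul, hq1, one_mul]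

lemma sum_mul_add_const {q f : S → ℝ} (hq1 : ∑ s, q s = 1) (c : ℝ) :
    ∑ s, q s * (f s + c) = ∑ s, q s * f s + c := by
  simp only [mul_add, sum_add_distrib, ← sum_mul, hq1, one_mul]

lemma le_div_one_sub_of_le_add_mul_sum [Finite A] (hp0 : ∀ s a s', 0 ≤ p s a s')
    (hp1 : ∀ s a, ∑ s', p s a s' = 1) (hγ0 : 0 ≤ γ) (hγ1 : γ < 1) {c : ℝ} {D : S → A → ℝ}
    {E : S → ℝ} (hDE : ∀ s a, D s a ≤ c + γ * ∑ s', p s a s' * E s')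
    (hE : ∀ s', ∃ b, E s' ≤ D s' b) (s : S) (a : A) : D s a ≤ c / (1 - γ) := by
  have : Nonempty (S × A) := ⟨(s, a)⟩
  obtain ⟨⟨s₀, a₀⟩, hmax⟩ := Finite.exists_max fun x : S × A => D x.1 x.2
  have hEmax : ∀ s', E s' ≤ D s₀ a₀ := fun s' =>
    let ⟨b, hb⟩ := hE s'
    hb.trans (hmax (s', b))
  have hfix : D s₀ a₀ ≤ c + γ * D s₀ a₀ :=
    (hDE s₀ a₀).trans <| add_le_add_right
      (mul_le_mul_of_nonneg_left (sum_mul_le_of_forall_le (hp0 s₀ a₀) (hp1 s₀ a₀) hEmax) hγ0) c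
  have hmax_le : D s₀ a₀ ≤ c / (1 - γ) := by
    rw [le_div_iff₀ (sub_pos.mpr hγ1)]
    linarith
  exact (hmax (s, a)).trans hmax_le

lemma bellman_sub {r₁ r₂ : S → A → ℝ} {f₁ f₂ : S → ℝ} {Q₁ Q₂ : S → A → ℝ}
    (hQ₁ : ∀ s a, Q₁ s a = r₁ s a + γ * ∑ s', p s a s' * f₁ s')
    (hQ₂ : ∀ s a, Q₂ s a = r₂ s a + γ * ∑ s', p s a s' * f₂ s') (s : S) (a : A) :
    Q₁ s a - Q₂ s a = (r₁ s a - r₂ s a) + γ * ∑ s', p s a s' * (f₁ s' - f₂ s') := by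
  rw [hQ₁, hQ₂]
  simp only [mul_sub, sum_sub_distrib]
  ring

lemma sub_le_of_bellman [Finite A] (hp0 : ∀ s a s', 0 ≤ p s a s')
    (hp1 : ∀ s a, ∑ s', p s a s' = 1) (hγ0 : 0 ≤ γ) (hγ1 : γ < 1) {c : ℝ}
    {r₁ r₂ : S → A → ℝ} {f₁ f₂ : S → ℝ} {Q₁ Q₂ : S → A → ℝ}
    (hQ₁ : ∀ s a, Q₁ s a = r₁ s a + γ * ∑ s', p s a s' * f₁ s')
    (hQ₂ : ∀ s a, Q₂ s a = r₂ s a + γ * ∑ s', p s a s' * f₂ s')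
    (hr : ∀ s a, r₁ s a - r₂ s a ≤ c) (hf : ∀ s', ∃ b, f₁ s' - f₂ s' ≤ Q₁ s' b - Q₂ s' b)
    (s : S) (a : A) : Q₁ s a - Q₂ s a ≤ c / (1 - γ) :=
  le_div_one_sub_of_le_add_mul_sum hp0 hp1 hγ0 hγ1
    (fun s a => (bellman_sub hQ₁ hQ₂ s a).trans_le (add_le_add_left (hr s a) _)) hf s a

lemma exists_iSup_sub_iSup_le [Finite A] [Nonempty A] (f g : A → ℝ) :
    ∃ b, (⨆ b, f b) - ⨆ b, g b ≤ f b - g b := by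
  obtain ⟨b, hb⟩ := exists_eq_ciSup_of_finite (f := f)
  exact ⟨b, by rw [← hb]; exact sub_le_sub_left (le_ciSup (Finite.bddAbove_range g) b) _⟩

end BellmanComparison

section GeneralizedPolicyImprovement

variable {S A ι : Type*} [Finite ι] [Nonempty ι]
  {Q Qt : ι → S → A → ℝ} {π : S → A} {ε : ℝ}

lemma le_iSup_gpi_add (hε : ∀ j s a, |Q j s a - Qt j s a| ≤ ε)
    (hπ : ∀ s a, (⨆ j, Qt j s a) ≤ ⨆ j, Qt j s (π s)) (k : ι) (s : S) (b : A) :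
    Q k s b ≤ (⨆ j, Q j s (π s)) + 2 * ε := by
  have hQt : Qt k s b ≤ ⨆ j, Qt j s b :=
    le_ciSup (Finite.bddAbove_range fun j => Qt j s b) k
  have hQt_le : (⨆ j, Qt j s (π s)) ≤ (⨆ j, Q j s (π s)) + ε := ciSup_le fun j =>
    calc Qt j s (π s) ≤ Q j s (π s) + ε := by linarith [(abs_le.mp (hε j s (π s))).1]
      _ ≤ (⨆ j, Q j s (π s)) + ε := by
          gcongr
          exact le_ciSup (Finite.bddAbove_range fun j => Q j s (π s)) j
  linarith [(abs_le.mp (hε k s b)).2, hπ s b]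

lemma gpi_value_sub_le [Fintype S] [Finite A] {p : S → A → S → ℝ} {γ : ℝ}
    (hp0 : ∀ s a s', 0 ≤ p s a s') (hp1 : ∀ s a, ∑ s', p s a s' = 1) (hγ0 : 0 ≤ γ)
    (hγ1 : γ < 1) {r : S → A → ℝ} {πs : ι → S → A} {Qπ : S → A → ℝ}
    (hQ : ∀ j s a, Q j s a = r s a + γ * ∑ s', p s a s' * Q j s' (πs j s'))
    (hε : ∀ j s a, |Q j s a - Qt j s a| ≤ ε)
    (hπ : ∀ s a, (⨆ j, Qt j s a) ≤ ⨆ j, Qt j s (π s))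
    (hQπ : ∀ s a, Qπ s a = r s a + γ * ∑ s', p s a s' * Qπ s' (π s'))
    (k : ι) (s : S) (a : A) :
    Q k s a - Qπ s a ≤ 2 * γ * ε / (1 - γ) := by
  set D : S → A → ℝ := fun s a => (⨆ j, Q j s a) - Qπ s a
  have hD : ∀ s a, D s a ≤ 2 * γ * ε + γ * ∑ s', p s a s' * D s' (π s') := fun s a => by
    refine sub_le_iff_le_add.mpr (ciSup_le fun j => sub_le_iff_le_add.mp ?_)
    calc Q j s a - Qπ s a = γ * ∑ s', p s a s' * (Q j s' (πs j s') - Qπ s' (π s')) := by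
          rw [bellman_sub (hQ j) hQπ, sub_self, zero_add]
      _ ≤ γ * ∑ s', p s a s' * (D s' (π s') + 2 * ε) := by
          gcongr with s' _
          · exact hp0 s a s'
          · linarith [le_iSup_gpi_add hε hπ j s' (πs j s')]
      _ = 2 * γ * ε + γ * ∑ s', p s a s' * D s' (π s') := by
          rw [sum_mul_add_const (hp1 s a)]
          ring
  have hDk : Q k s a - Qπ s a ≤ D s a :=
    sub_le_sub_right (le_ciSup (Finite.bddAbove_range fun j => Q j s a) k) _
  exact hDk.trans <|
    le_div_one_sub_of_le_add_mul_sum hp0 hp1 hγ0 hγ1 hD (fun s' => ⟨π s', le_rfl⟩) s a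

end GeneralizedPolicyImprovement

lemma abs_inner_sub_inner_le {E : Type*} [NormedAddCommGroup E] [InnerProductSpace ℝ E]
    {x : E} {C : ℝ} (hx : ‖x‖ ≤ C) (y z : E) :
    |(inner ℝ x y : ℝ) - inner ℝ x z| ≤ C * ‖y - z‖ := by
  rw [← inner_sub_right]
  exact (abs_real_inner_le_norm _ _).trans (mul_le_mul_of_nonneg_right hx (norm_nonneg _))

theorem gpi_successor_features_general
    {S A : Type*} [Fintype S] [Fintype A]
    {d : ℕ}
    (p : S → A → S → ℝ)
    (hp0 : ∀ s a s', 0 ≤ p s a s') (hp1 : ∀ s a, ∑ s', p s a s' = 1)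
    (γ : ℝ) (hγ0 : 0 ≤ γ) (hγ1 : γ < 1)
    (φ : S → A → EuclideanSpace ℝ (Fin d))
    (φmax : ℝ) (hφmax : ∀ s a, ‖φ s a‖ ≤ φmax)
    (n : ℕ) (hn : 0 < n)
    (w : Fin n → EuclideanSpace ℝ (Fin d)) (wi : EuclideanSpace ℝ (Fin d))
    -- π*_j : optimal policy of task w_j
    (πj : Fin n → S → A)
    (Qstarj : Fin n → S → A → ℝ)
    (hQstarj : ∀ j s a, Qstarj j s a =
      (inner ℝ (φ s a) (w j) : ℝ) + γ * ∑ s', p s a s' * ⨆ b, Qstarj j s' b)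
    (hπjopt : ∀ j s a, Qstarj j s a =
      (inner ℝ (φ s a) (w j) : ℝ) + γ * ∑ s', p s a s' * Qstarj j s' (πj j s'))
    -- Q_i^{π*_j} : value of π*_j in task wᵢ
    (Qi : Fin n → S → A → ℝ)
    (hQi : ∀ j s a, Qi j s a =
      (inner ℝ (φ s a) wi : ℝ) + γ * ∑ s', p s a s' * Qi j s' (πj j s'))
    -- approximations
    (Qt : Fin n → S → A → ℝ) (ε : ℝ)
    (hε : ∀ j s a, |Qi j s a - Qt j s a| ≤ ε)
    -- GPI policy
    (π : S → A)
    (hπ : ∀ s a, (⨆ j, Qt j s a) ≤ ⨆ j, Qt j s (π s))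
    (Qπ : S → A → ℝ)
    (hQπ : ∀ s a, Qπ s a =
      (inner ℝ (φ s a) wi : ℝ) + γ * ∑ s', p s a s' * Qπ s' (π s'))
    -- Q*_i : optimal value of task wᵢ
    (Qstari : S → A → ℝ)
    (hQstari : ∀ s a, Qstari s a =
      (inner ℝ (φ s a) wi : ℝ) + γ * ∑ s', p s a s' * ⨆ b, Qstari s' b) :
    ∀ s a, Qstari s a - Qπ s a ≤
      2 / (1 - γ) * (φmax * (⨅ j, ‖wi - w j‖) + ε) := by
  intro s a
  have : Nonempty (Fin n) := Fin.pos_iff_nonempty.mp hn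
  have : Nonempty A := ⟨a⟩
  obtain ⟨j, hj⟩ := exists_eq_ciInf_of_finite (f := fun j => ‖wi - w j‖)
  set δ := φmax * ‖wi - w j‖
  have hr : ∀ s a, |(inner ℝ (φ s a) wi : ℝ) - inner ℝ (φ s a) (w j)| ≤ δ :=
    fun s a => abs_inner_sub_inner_le (hφmax s a) _ _
  have hB : Qstari s a - Qstarj j s a ≤ δ / (1 - γ) :=
    sub_le_of_bellman hp0 hp1 hγ0 hγ1 hQstari (hQstarj j) (fun s a => (abs_le.mp (hr s a)).2)
      (fun s' => exists_iSup_sub_iSup_le _ _) s a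
  have hA : Qstarj j s a - Qi j s a ≤ δ / (1 - γ) :=
    sub_le_of_bellman hp0 hp1 hγ0 hγ1 (hπjopt j) (hQi j)
      (fun s a => by linarith [(abs_le.mp (hr s a)).1]) (fun s' => ⟨πj j s', le_rfl⟩) s a
  have hC : Qi j s a - Qπ s a ≤ 2 * γ * ε / (1 - γ) :=
    gpi_value_sub_le hp0 hp1 hγ0 hγ1 hQi hε hπ hQπ j s a
  have hγε : γ * ε ≤ ε := mul_le_of_le_one_left ((abs_nonneg _).trans (hε j s a)) hγ1.le
  rw [← hj]
  calc Qstari s a - Qπ s a ≤ δ / (1 - γ) + δ / (1 - γ) + 2 * γ * ε / (1 - γ) := by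
        linarith
    _ ≤ 2 / (1 - γ) * (δ + ε) := by
        rw [← add_div, ← add_div, div_mul_eq_mul_div]
        gcongr
        linarith

/-- Theorem 2 of the paper: GPI over SF-based value functions of optimal
policies of tasks w₁,...,wₙ, evaluated on task wᵢ. -/
theorem gpi_successor_features
    {S A : Type*} [Fintype S] [Fintype A] [Nonempty S] [Nonempty A]
    {d : ℕ}
    (p : S → A → S → ℝ)
    (hp0 : ∀ s a s', 0 ≤ p s a s') (hp1 : ∀ s a, ∑ s', p s a s' = 1)
    (γ : ℝ) (hγ0 : 0 ≤ γ) (hγ1 : γ < 1)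
    (φ : S → A → EuclideanSpace ℝ (Fin d))
    (φmax : ℝ) (hφmax : ∀ s a, ‖φ s a‖ ≤ φmax)
    (n : ℕ) (hn : 0 < n)
    (w : Fin n → EuclideanSpace ℝ (Fin d)) (wi : EuclideanSpace ℝ (Fin d))
    -- π*_j : optimal policy of task w_j
    (πj : Fin n → S → A)
    (Qstarj : Fin n → S → A → ℝ)
    (hQstarj : ∀ j s a, Qstarj j s a =
      (inner ℝ (φ s a) (w j) : ℝ) + γ * ∑ s', p s a s' * ⨆ b, Qstarj j s' b)
    (hπjopt : ∀ j s a, Qstarj j s a =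
      (inner ℝ (φ s a) (w j) : ℝ) + γ * ∑ s', p s a s' * Qstarj j s' (πj j s'))
    -- Q_i^{π*_j} : value of π*_j in task wᵢ
    (Qi : Fin n → S → A → ℝ)
    (hQi : ∀ j s a, Qi j s a =
      (inner ℝ (φ s a) wi : ℝ) + γ * ∑ s', p s a s' * Qi j s' (πj j s'))
    -- approximations
    (Qt : Fin n → S → A → ℝ) (ε : ℝ)
    (hε : ∀ j s a, |Qi j s a - Qt j s a| ≤ ε)
    -- GPI policy
    (π : S → A)
    (hπ : ∀ s a, (⨆ j, Qt j s a) ≤ ⨆ j, Qt j s (π s))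
    (Qπ : S → A → ℝ)
    (hQπ : ∀ s a, Qπ s a =
      (inner ℝ (φ s a) wi : ℝ) + γ * ∑ s', p s a s' * Qπ s' (π s'))
    -- Q*_i : optimal value of task wᵢ
    (Qstari : S → A → ℝ)
    (hQstari : ∀ s a, Qstari s a =
      (inner ℝ (φ s a) wi : ℝ) + γ * ∑ s', p s a s' * ⨆ b, Qstari s' b) :
    ∀ s a, Qstari s a - Qπ s a ≤
      2 / (1 - γ) * (φmax * (⨅ j, ‖wi - w j‖) + ε) :=
  gpi_successor_features_general p hp0 hp1 γ hγ0 hγ1 φ φmax hφmax n hn w wi πj Qstarj hQstarj hπjopt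
    Qi hQi Qt ε hε π hπ Qπ hQπ Qstari hQstari
end

section
/- Under Theorem 1's hypotheses with exact value functions (ε = 0): if π(s) ∈ argmax_a max_i Q^{π_i}(s,a), then Q^{π}(s,a) ≥ Q^{π_i}(s,a) for every i and every (s,a); i.e., the GPI policy is at least as good as each of π₁,...,πₙ. -/
open Finset

/-- Exact GPI (ε = 0): the GPI policy is at least as good as each πᵢ. -/
theorem exact_gpi
    {S A : Type*} [Fintype S] [Fintype A] [Nonempty S] [Nonempty A]
    (p : S → A → S → ℝ)
    (hp0 : ∀ s a s', 0 ≤ p s a s') (hp1 : ∀ s a, ∑ s', p s a s' = 1)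
    (r : S → A → ℝ) (γ : ℝ) (hγ0 : 0 ≤ γ) (hγ1 : γ < 1)
    (n : ℕ) (hn : 0 < n)
    (πi : Fin n → S → A)
    (Q : Fin n → S → A → ℝ)
    (hQ : ∀ i s a, Q i s a = r s a + γ * ∑ s', p s a s' * Q i s' (πi i s'))
    (π : S → A)
    (hπ : ∀ s a, (⨆ i, Q i s a) ≤ ⨆ i, Q i s (π s))
    (Qπ : S → A → ℝ)
    (hQπ : ∀ s a, Qπ s a = r s a + γ * ∑ s', p s a s' * Qπ s' (π s')) :
    ∀ i s a, Q i s a ≤ Qπ s a := by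
  haveI : NeZero n := ⟨hn.ne'⟩
  obtain ⟨⟨i₀, s₀, a₀⟩, hmax⟩ := Finite.exists_max
    (fun q : Fin n × S × A => Q q.1 q.2.1 q.2.2 - Qπ q.2.1 q.2.2)
  set D := Q i₀ s₀ a₀ - Qπ s₀ a₀ with hD
  have hmax' : ∀ i s a, Q i s a - Qπ s a ≤ D := fun i s a => hmax (i, s, a)
  have key : ∀ s', Q i₀ s' (πi i₀ s') ≤ Qπ s' (π s') + D := by
    intro s'
    have h1 : Q i₀ s' (πi i₀ s') ≤ ⨆ j, Q j s' (πi i₀ s') :=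
      le_ciSup (f := fun j => Q j s' (πi i₀ s')) (Set.Finite.bddAbove (Set.finite_range _)) i₀
    have h2 := hπ s' (πi i₀ s')
    have h3 : (⨆ j, Q j s' (π s')) ≤ Qπ s' (π s') + D := by
      apply ciSup_le
      intro j
      linarith [hmax' j s' (π s')]
    linarith
  have hsum : ∑ s', p s₀ a₀ s' * Q i₀ s' (πi i₀ s')
      ≤ ∑ s', p s₀ a₀ s' * (Qπ s' (π s') + D) := by
    apply Finset.sum_le_sum
    intro s' _
    exact mul_le_mul_of_nonneg_left (key s') (hp0 _ _ _)
  have hsplit : ∑ s', p s₀ a₀ s' * (Qπ s' (π s') + D)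
      = (∑ s', p s₀ a₀ s' * Qπ s' (π s')) + D := by
    simp [mul_add, Finset.sum_add_distrib, ← Finset.sum_mul, hp1]
  have h4 : (∑ s', p s₀ a₀ s' * Q i₀ s' (πi i₀ s'))
      - (∑ s', p s₀ a₀ s' * Qπ s' (π s')) ≤ D := by linarith
  have hDγ : D ≤ γ * D := by
    have e1 := hQ i₀ s₀ a₀
    have e2 := hQπ s₀ a₀
    nlinarith [mul_le_mul_of_nonneg_left h4 hγ0]
  have hD0 : D ≤ 0 := by nlinarith
  intro i s a
  linarith [hmax' i s a]
end
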